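/- arXiv:1411.2472 — 7 statements merged into one kernel-verified Lean document; each statement's English description precedes it below -/
import Mathlib

section
/- If A is a semi-prime algebra, then every additive 2-local derivation on A is a derivation. -/
def IsDerivation {A : Type*} [Ring A] [Algebra ℂ A] (D : A → A) : Prop :=
  (∀ x y, D (x + y) = D x + D y) ∧ (∀ (c : ℂ) (x), D (c • x) = c • D x) ∧
  (∀ x y, D (x * y) = D x * y + x * D y)

def Is2LocalDerivation {A : Type*} [Ring A] [Algebra ℂ A] (Δ : A → A) : Prop :=
  ∀ x y, ∃ D, IsDerivation D ∧ Δ x = D x ∧ Δ y = D y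

/-- A semi-prime algebra: `aAa = 0` implies `a = 0`. -/
def IsSemiprime (A : Type*) [Ring A] : Prop :=
  ∀ a : A, (∀ x : A, a * x * a = 0) → a = 0

theorem jordan_deriv {A : Type*} [Ring A] [Algebra ℂ A] (hA : IsSemiprime A)
    (d : A → A) (hadd : ∀ x y, d (x + y) = d x + d y)
    (hJ : ∀ x, d (x*x) = d x * x + x * d x) :
    ∀ x y, d (x*y) = d x * y + x * d y := by
  have tf : ∀ a : A, a + a = 0 → a = 0 := by
    intro a h
    have h2 : (2:ℂ) • a = 0 := by rw [two_smul]; exact h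
    calc a = ((1/2 : ℂ) * 2) • a := by norm_num
      _ = (1/2 : ℂ) • ((2:ℂ) • a) := by rw [mul_smul]
      _ = 0 := by rw [h2, smul_zero]
  have h0 : d 0 = 0 := by
    have h := hadd 0 0
    rw [add_zero] at h
    exact left_eq_add.mp h
  have hJ2 : ∀ x y, d (x*y + y*x) = d x*y + x*d y + d y*x + y*d x := by
    intro x y
    have h1 := hJ (x+y)
    rw [show (x+y)*(x+y) = x*x + (x*y + y*x) + y*y from by noncomm_ring,
      hadd (x*x + (x*y + y*x)) (y*y), hadd (x*x) (x*y + y*x), hJ x, hJ y, hadd x y] at h1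
    linear_combination (norm := noncomm_ring) h1
  have hsub : ∀ x y, d (x - y) = d x - d y := by
    intro x y
    have h := hadd (x - y) y
    rw [sub_add_cancel] at h
    exact eq_sub_of_add_eq h.symm
  have h3 : ∀ x y, d (x*y*x) = d x*y*x + x*d y*x + x*y*d x := by
    intro x y
    have h1 := hJ2 x (x*y + y*x)
    rw [hJ2 x y,
      show x*(x*y + y*x) + (x*y + y*x)*x = ((x*x)*y + y*(x*x)) + (x*y*x + x*y*x) from by noncomm_ring,
      hadd ((x*x)*y + y*(x*x)) (x*y*x + x*y*x), hadd (x*y*x) (x*y*x), hJ2 (x*x) y, hJ x] at h1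
    have h2 : (d (x*y*x) - (d x*y*x + x*d y*x + x*y*d x)) +
        (d (x*y*x) - (d x*y*x + x*d y*x + x*y*d x)) = 0 := by
      linear_combination (norm := noncomm_ring) h1
    have h4 := tf _ h2
    linear_combination (norm := noncomm_ring) h4
  have h33 : ∀ x y z, d (x*y*z + z*y*x) =
      d x*y*z + x*d y*z + x*y*d z + d z*y*x + z*d y*x + z*y*d x := by
    intro x y z
    have h1 := h3 (x+z) y
    rw [hadd x z,
      show (x+z)*y*(x+z) = x*y*x + (x*y*z + z*y*x) + z*y*z from by noncomm_ring,
      hadd (x*y*x + (x*y*z + z*y*x)) (z*y*z), hadd (x*y*x) (x*y*z + z*y*x),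
      h3 x y, h3 z y] at h1
    linear_combination (norm := noncomm_ring) h1
  have hyx : ∀ x y, d (y*x) = d x*y + x*d y + d y*x + y*d x - d (x*y) := by
    intro x y
    have h1 := hJ2 x y
    rw [hadd (x*y) (y*x)] at h1
    linear_combination (norm := noncomm_ring) h1
  -- step5 : delta(x,y) z [x,y] + [x,y] z delta(x,y) = 0
  have step5 : ∀ x y z, (d (x*y) - d x*y - x*d y) * z * (x*y - y*x)
      + (x*y - y*x) * z * (d (x*y) - d x*y - x*d y) = 0 := by
    intro x y z
    have hA1 := h33 (x*y) z (y*x)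
    rw [hyx x y] at hA1
    have hB1 : d ((x*y)*z*(y*x) + (y*x)*z*(x*y)) = d (x*(y*z*y)*x) + d (y*(x*z*x)*y) := by
      rw [show (x*y)*z*(y*x) + (y*x)*z*(x*y) = x*(y*z*y)*x + y*(x*z*x)*y from by noncomm_ring,
        hadd]
    rw [hB1, h3 x (y*z*y), h3 y (x*z*x), h3 y z, h3 x z] at hA1
    linear_combination (norm := noncomm_ring) hA1
  -- Bresar's Lemma 1
  have lem1 : ∀ a b : A, (∀ z, a*z*b + b*z*a = 0) → ∀ z, a*z*b = 0 := by
    intro a b hyp z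
    apply hA
    intro w
    have h' : a*z*b = -(b*z*a) := by linear_combination (norm := noncomm_ring) hyp z
    have r1 : a*z*b*w*(a*z*b) = -(a*z*b*w*b*z*a) := by
      calc a*z*b*w*(a*z*b) = a*z*b*w*(-(b*z*a)) := congrArg (fun t => a*z*b*w*t) h'
        _ = -(a*z*b*w*b*z*a) := by noncomm_ring
    have r2 : a*z*b*w*(a*z*b) = a*z*b*w*b*z*a := by
      have s1 : a*z*b*w*(a*z*b) = a*z*(b*w*a)*z*b := by noncomm_ring
      have hw : b*w*a = -(a*w*b) := by linear_combination (norm := noncomm_ring) hyp w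
      rw [s1, hw]
      calc a*z*(-(a*w*b))*z*b = -(a*z*(a*(w*b*z)*b)) := by noncomm_ring
        _ = -(a*z*(-(b*(w*b*z)*a))) := by
            rw [show a*(w*b*z)*b = -(b*(w*b*z)*a) from by
              linear_combination (norm := noncomm_ring) hyp (w*b*z)]
        _ = a*z*b*w*b*z*a := by noncomm_ring
    have hE : a*z*b*w*(a*z*b) + a*z*b*w*(a*z*b) = 0 := by
      linear_combination (norm := noncomm_ring) r1 + r2
    exact tf _ hE
  have step6 : ∀ x y z, (d (x*y) - d x*y - x*d y) * z * (x*y - y*x) = 0 :=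
    fun x y => lem1 _ _ (step5 x y)
  -- step7: delta(x,y) z [x,w] = 0
  have step7 : ∀ x y w z, (d (x*y) - d x*y - x*d y) * z * (x*w - w*x) = 0 := by
    intro x y w z
    have hd1 : d (x*(y+w)) = d (x*y) + d (x*w) := by rw [mul_add, hadd]
    have hS : ∀ z', (d (x*y) - d x*y - x*d y) * z' * (x*w - w*x)
        + (d (x*w) - d x*w - x*d w) * z' * (x*y - y*x) = 0 := by
      intro z'
      have h6 := step6 x (y+w) z'
      rw [hd1, hadd y w] at h6
      linear_combination (norm := noncomm_ring) h6 - step6 x y z' - step6 x w z'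
    apply hA
    intro r
    linear_combination (norm := noncomm_ring)
      ((d (x*y) - d x*y - x*d y)*z*(x*w - w*x)*r) * (hS z)
      - step6 x y (z*(x*w - w*x)*r*(d (x*w) - d x*w - x*d w)*z)
  -- step8: delta(x,y) z [p,q] = 0
  have step8 : ∀ x y p q z, (d (x*y) - d x*y - x*d y) * z * (p*q - q*p) = 0 := by
    intro x y p q z
    have hd1 : d ((x+p)*y) = d (x*y) + d (p*y) := by rw [add_mul, hadd]
    have hS : ∀ z', (d (x*y) - d x*y - x*d y) * z' * (p*q - q*p)
        + (d (p*y) - d p*y - p*d y) * z' * (x*q - q*x) = 0 := by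
      intro z'
      have h7 := step7 (x+p) y q z'
      rw [hd1, hadd x p] at h7
      linear_combination (norm := noncomm_ring) h7 - step7 x y q z' - step7 p y q z'
    apply hA
    intro r
    linear_combination (norm := noncomm_ring)
      ((d (x*y) - d x*y - x*d y)*z*(p*q - q*p)*r) * (hS z)
      - step7 x y q (z*(p*q - q*p)*r*(d (p*y) - d p*y - p*d y)*z)
  -- step9: [p,q] z delta(x,y) = 0
  have step9 : ∀ x y p q z, (p*q - q*p) * z * (d (x*y) - d x*y - x*d y) = 0 := by
    intro x y p q z
    apply hA
    intro r
    linear_combination (norm := noncomm_ring)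
      ((p*q - q*p)*z) * (step8 x y p q r) * (z*(d (x*y) - d x*y - x*d y))
  -- centrality of delta(x,y)
  have central : ∀ x y t, (d (x*y) - d x*y - x*d y) * t = t * (d (x*y) - d x*y - x*d y) := by
    intro x y t
    have h1 : ∀ z, ((d (x*y) - d x*y - x*d y)*t - t*(d (x*y) - d x*y - x*d y)) * z *
        ((d (x*y) - d x*y - x*d y)*t - t*(d (x*y) - d x*y - x*d y)) = 0 := by
      intro z
      linear_combination (norm := noncomm_ring)
        step8 x y (d (x*y) - d x*y - x*d y) t (t*z)
        - t * (step8 x y (d (x*y) - d x*y - x*d y) t z)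
    have h2 := hA _ h1
    linear_combination (norm := noncomm_ring) h2
  intro x y
  obtain ⟨e, he⟩ : ∃ e, e = d (x*y) - d x*y - x*d y := ⟨_, rfl⟩
  have key1 : ∀ p q : A, e * (p*q - q*p) = 0 := by
    intro p q
    have h := step8 x y p q 1
    rw [mul_one, ← he] at h
    exact h
  have keyz : ∀ p q z, e * z * (p*q - q*p) = 0 := by
    intro p q z
    have h := step8 x y p q z
    rw [← he] at h
    exact h
  have cenE : ∀ t, e * t = t * e := by
    intro t
    have h := central x y t
    rw [← he] at h
    exact h
  have hc0e : (x*y - y*x) * e = 0 := by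
    have h := step9 x y x y 1
    rw [mul_one, ← he] at h
    exact h
  have eq2e : e + e = d (x*y - y*x) - (d x*y - y*d x) - (x*d y - d y*x) := by
    rw [hsub, he]
    linear_combination (norm := noncomm_ring) hyx x y
  have e2 : e*e + e*e = e * d (x*y - y*x) := by
    linear_combination (norm := noncomm_ring) e * eq2e - key1 (d x) y - key1 x (d y)
  have hz0 : e * (x*y - y*x) + (x*y - y*x) * e = 0 := by
    linear_combination (norm := noncomm_ring) key1 x y + hc0e
  have jords := hJ2 e (x*y - y*x)
  rw [hz0, h0] at jords
  have e2dc : (e*e) * d (x*y - y*x) + (e*e) * d (x*y - y*x) = 0 := by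
    linear_combination (norm := noncomm_ring) -(e * jords)
      - keyz x y (d e) - key1 x y * d e + e * (cenE (d (x*y - y*x)))
  have e2dc0 := tf _ e2dc
  have e3 : e*e*e + e*e*e = 0 := by
    linear_combination (norm := noncomm_ring) e * e2 + e2dc0
  have e30 := tf _ e3
  have ee0 : e*e = 0 := by
    apply hA
    intro z
    have c1 := congrArg (fun t => e*e*t*e) (cenE z)
    linear_combination (norm := noncomm_ring) -c1 + e30 * (z*e)
  have e0 : e = 0 := by
    apply hA
    intro z
    have c2 := congrArg (fun t => e*t) (cenE z)
    linear_combination (norm := noncomm_ring) -c2 + ee0 * z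
  rw [he] at e0
  linear_combination (norm := noncomm_ring) e0

theorem stmt1 {A : Type*} [Ring A] [Algebra ℂ A] (hA : IsSemiprime A)
    (Δ : A → A) (hΔ : Is2LocalDerivation Δ)
    (hadd : ∀ x y : A, Δ (x + y) = Δ x + Δ y) :
    IsDerivation Δ := by
  refine ⟨hadd, ?_, ?_⟩
  · intro c x
    obtain ⟨D, hD, h1, h2⟩ := hΔ x (c • x)
    rw [h2, hD.2.1, ← h1]
  · have hJ : ∀ x : A, Δ (x*x) = Δ x * x + x * Δ x := by
      intro x
      obtain ⟨D, hD, h1, h2⟩ := hΔ x (x*x)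
      rw [h2, hD.2.2, ← h1]
    exact jordan_deriv hA Δ hadd hJ
end

section
/- If A is a unital Banach algebra in which every derivation is inner, then every derivation on the matrix algebra M_n(A), n ≥ 2, is inner. -/
/-- Every derivation is inner. -/
def HasInnerDerivationProperty (A : Type*) [Ring A] [Algebra ℂ A] : Prop :=
  ∀ D : A → A, IsDerivation D → ∃ a : A, ∀ x, D x = a * x - x * a

/-!
Fix an index `z` and put `b = ∑ᵢ D(E_{iz}) E_{zi}`. The Leibniz rule shows that `D - ad b`
kills every matrix unit `E_{kl}`. A derivation killing the matrix units maps a scalar matrix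
to a matrix commuting with all `E_{kl}`, i.e. to a scalar matrix, and so restricts to a
derivation `d` of `A`, which is `ad c` by hypothesis. Since `x = ∑ x_{kl} E_{kl}`, a derivation
of `Mₙ(A)` is determined by its values on scalar matrices and matrix units, so
`D - ad b = ad (c·1)`.
-/

open Matrix

section Derivation

variable {R : Type*} [Ring R] [Algebra ℂ R] {D D₁ D₂ : R → R}

theorem IsDerivation.leibniz (hD : IsDerivation D) (x y : R) : D (x * y) = D x * y + x * D y :=
  hD.2.2 x y

theorem IsDerivation.map_zero (hD : IsDerivation D) : D 0 = 0 := by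
  simpa using hD.1 0 0

theorem IsDerivation.map_sum (hD : IsDerivation D) {ι : Type*} (s : Finset ι) (f : ι → R) :
    D (∑ i ∈ s, f i) = ∑ i ∈ s, D (f i) :=
  _root_.map_sum (AddMonoidHom.mk' D hD.1) f s

theorem isDerivation_commutator (b : R) : IsDerivation fun x => b * x - x * b := by
  refine ⟨fun x y => ?_, fun c x => ?_, fun x y => ?_⟩ <;> beta_reduce
  · noncomm_ring
  · rw [smul_sub, mul_smul_comm, smul_mul_assoc]
  · noncomm_ring

theorem IsDerivation.sub (h₁ : IsDerivation D₁) (h₂ : IsDerivation D₂) :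
    IsDerivation fun x => D₁ x - D₂ x := by
  obtain ⟨add₁, smul₁, mul₁⟩ := h₁
  obtain ⟨add₂, smul₂, mul₂⟩ := h₂
  refine ⟨fun x y => ?_, fun c x => ?_, fun x y => ?_⟩ <;> beta_reduce
  · rw [add₁, add₂]; abel
  · rw [smul₁, smul₂, smul_sub]
  · rw [mul₁, mul₂]; noncomm_ring

end Derivation

namespace IsDerivation

variable {A ι : Type*} [Ring A] [Algebra ℂ A] [Fintype ι] [DecidableEq ι]
  {D : Matrix ι ι A → Matrix ι ι A}

theorem exists_eq_commutator_on_single (hD : IsDerivation D) (z : ι) :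
    ∃ b, ∀ k l, D (single k l 1) = b * single k l 1 - single k l 1 * b := by
  refine ⟨∑ i, D (single i z 1) * single z i 1, fun k l => ?_⟩
  have hb : (∑ i, D (single i z 1) * single z i 1) * single k l 1
      = D (single k z 1) * single z l 1 := by
    rw [Finset.sum_mul, Fintype.sum_eq_single k fun i hi => ?_]
    · simp [mul_assoc]
    · simp [mul_assoc, single_mul_single_of_ne _ _ _ _ hi]
  -- Sum the Leibniz rule for `E_{kl} E_{iz}` against `E_{zi}` over `i`.
  have hleibniz : D (single k z 1) * single z l 1
      = D (single k l 1) + single k l 1 * ∑ i, D (single i z 1) * single z i 1 := by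
    have hsum : ∑ i, D (single k l 1 * single i z 1) * single z i 1
        = D (single k z 1) * single z l 1 := by
      rw [Fintype.sum_eq_single l fun i hi => ?_]
      · simp
      · simp [single_mul_single_of_ne _ _ _ _ (Ne.symm hi), hD.map_zero]
    simp_rw [← hsum, hD.leibniz, add_mul, Finset.sum_add_distrib, mul_assoc, ← Finset.mul_sum,
      single_mul_single_same, mul_one, sum_single_one, mul_one]
  rw [hb, hleibniz, add_sub_cancel_right]

theorem map_scalar_mem_range (hD : IsDerivation D) (hsingle : ∀ i j, D (single i j 1) = 0)
    (a : A) : D (scalar ι a) ∈ Set.range (scalar ι) := by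
  refine mem_range_scalar_iff_commute_single'.mpr fun i j => ?_
  have hcomm : Commute (single i j 1) (scalar ι a) :=
    mem_range_scalar_iff_commute_single'.mp ⟨a, rfl⟩ i j
  have h₁ := hD.leibniz (single i j 1) (scalar ι a)
  have h₂ := hD.leibniz (scalar ι a) (single i j 1)
  rw [hsingle, zero_mul, zero_add, hcomm.eq, h₂, hsingle, mul_zero, add_zero] at h₁
  exact h₁.symm

theorem of_map_scalar [Nonempty ι] (hD : IsDerivation D) {d : A → A}
    (hd : ∀ a, scalar ι (d a) = D (scalar ι a)) : IsDerivation d := by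
  have hscalar_smul : ∀ (c : ℂ) (a : A), scalar ι (c • a) = c • scalar ι a := fun c a => by
    simp only [scalar_apply, ← diagonal_smul]; rfl
  refine ⟨fun x y => ?_, fun c x => ?_, fun x y => ?_⟩ <;> rw [← scalar_inj (n := ι)]
  · simp only [map_add, hd, hD.1]
  · rw [hscalar_smul, hd, hd, hscalar_smul, hD.2.1]
  · simp only [map_add, map_mul, hd, hD.leibniz]

theorem matrix_ext {D₁ D₂ : Matrix ι ι A → Matrix ι ι A} (h₁ : IsDerivation D₁)
    (h₂ : IsDerivation D₂) (hsingle : ∀ i j, D₁ (single i j 1) = D₂ (single i j 1))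
    (hscalar : ∀ a, D₁ (scalar ι a) = D₂ (scalar ι a)) : D₁ = D₂ := by
  have hdecomp : ∀ x : Matrix ι ι A, x = ∑ i, ∑ j, scalar ι (x i j) * single i j 1 := by
    intro x
    simp_rw [scalar_apply, ← smul_eq_diagonal_mul, smul_single, smul_eq_mul, mul_one]
    exact matrix_eq_sum_single x
  funext x
  rw [hdecomp x, h₁.map_sum, h₂.map_sum]
  simp_rw [h₁.map_sum, h₂.map_sum, h₁.leibniz, h₂.leibniz, hsingle, hscalar]

end IsDerivation

theorem HasInnerDerivationProperty.matrix {A ι : Type*} [Ring A] [Algebra ℂ A] [Fintype ι]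
    [DecidableEq ι] (hA : HasInnerDerivationProperty A) :
    HasInnerDerivationProperty (Matrix ι ι A) := by
  intro D hD
  cases isEmpty_or_nonempty ι
  · exact ⟨0, fun _ => Subsingleton.elim _ _⟩
  obtain ⟨z⟩ := ‹Nonempty ι›
  obtain ⟨b, hb⟩ := hD.exists_eq_commutator_on_single z
  have hD' := hD.sub (isDerivation_commutator b)
  have hD'single : ∀ i j, D (single i j 1) - (b * single i j 1 - single i j 1 * b) = 0 :=
    fun i j => sub_eq_zero.mpr (hb i j)
  choose d hd using hD'.map_scalar_mem_range hD'single
  obtain ⟨c, hc⟩ := hA d (hD'.of_map_scalar hd)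
  have hD'eq := hD'.matrix_ext (isDerivation_commutator (scalar ι c))
    (fun i j => by
      rw [hD'single, eq_comm, sub_eq_zero]
      exact (mem_range_scalar_iff_commute_single'.mp ⟨c, rfl⟩ i j).eq.symm)
    (fun a => by rw [← hd, hc, map_sub, map_mul, map_mul])
  refine ⟨b + scalar ι c, fun x => ?_⟩
  have hx := congrFun hD'eq x
  rw [sub_eq_iff_eq_add] at hx
  rw [hx]
  noncomm_ring

theorem stmt2_general {A : Type*} [NormedRing A] [NormedAlgebra ℂ A]
    (hA : HasInnerDerivationProperty A) {n : ℕ}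
    (D : Matrix (Fin n) (Fin n) A → Matrix (Fin n) (Fin n) A)
    (hD : IsDerivation D) :
    ∃ a : Matrix (Fin n) (Fin n) A, ∀ x, D x = a * x - x * a :=
  hA.matrix D hD

theorem stmt2 {A : Type*} [NormedRing A] [NormedAlgebra ℂ A] [CompleteSpace A]
    (hA : HasInnerDerivationProperty A) {n : ℕ} (hn : 2 ≤ n)
    (D : Matrix (Fin n) (Fin n) A → Matrix (Fin n) (Fin n) A)
    (hD : IsDerivation D) :
    ∃ a : Matrix (Fin n) (Fin n) A, ∀ x, D x = a * x - x * a :=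
  stmt2_general hA D hD
end

section
/- Let Δ be a 2-local derivation on M_n(A), n ≥ 2, that vanishes on the linear span of the matrix units. Then Δ maps e_{i,i}M_n(A)e_{j,j} into itself for all i, j; moreover for x ∈ e_{i,i}M_n(A)e_{j,j} one has Δ(x) = e_{i,i}Δ(x)e_{j,j}. -/
open Matrix

/-- `Δ` vanishes on the linear span of the matrix units. -/
def VanishesOnUnits {A : Type*} [Ring A] [Algebra ℂ A] {n : ℕ}
    (Δ : Matrix (Fin n) (Fin n) A → Matrix (Fin n) (Fin n) A) : Prop :=
  ∀ x ∈ Submodule.span ℂ (Set.range fun p : Fin n × Fin n =>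
      Matrix.single p.1 p.2 (1 : A)), Δ x = 0

/-
A derivation `D` that kills two idempotents `e` and `f` satisfies `D (e x f) = e (D x) f`, so it
preserves the corner `e B f`. Given `x` in the corner `e_ii M_n(A) e_jj`, the 2-local property yields
a derivation agreeing with `Δ` at `x` and at one further element of the span of the matrix units:
`e_ii` itself if `i = j`, and `e_ii + 2 e_jj` otherwise. In the latter case `D` kills both
`e_ii + 2 e_jj` and its square `e_ii + 4 e_jj`, hence both `e_ii` and `e_jj`.
-/

namespace IsDerivation

variable {B : Type*} [Ring B] [Algebra ℂ B] {D : B → B}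

theorem map_mul_eq_zero (hD : IsDerivation D) {x y : B} (hx : D x = 0) (hy : D y = 0) :
    D (x * y) = 0 := by
  rw [hD.2.2, hx, hy, zero_mul, mul_zero, add_zero]

theorem map_eq_mul_map_mul_of_eq_mul_mul (hD : IsDerivation D) {e f x : B} (he : D e = 0)
    (hf : D f = 0) (hx : x = e * x * f) : D x = e * D x * f := by
  obtain ⟨-, -, hmul⟩ := hD
  calc D x = D (e * (x * f)) := by rw [← mul_assoc, ← hx]
    _ = e * (D x * f) := by rw [hmul, he, zero_mul, zero_add, hmul, hf, mul_zero, add_zero]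
    _ = e * D x * f := (mul_assoc _ _ _).symm

theorem map_eq_zero_of_map_add_two_smul_eq_zero (hD : IsDerivation D) {e f : B}
    (he : IsIdempotentElem e) (hf : IsIdempotentElem f) (hef : e * f = 0) (hfe : f * e = 0)
    (h : D (e + (2 : ℂ) • f) = 0) : D e = 0 ∧ D f = 0 := by
  have hsq : (e + (2 : ℂ) • f) * (e + (2 : ℂ) • f) = e + (4 : ℂ) • f := by
    simp only [mul_add, add_mul, smul_mul_assoc, mul_smul_comm, he.eq, hf.eq, hef, hfe,
      smul_zero, add_zero, zero_add, smul_smul]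
    norm_num
  have h2 : D e + (2 : ℂ) • D f = 0 := by rw [← hD.2.1, ← hD.1, h]
  have h4 : D e + (4 : ℂ) • D f = 0 := by
    rw [← hD.2.1, ← hD.1, ← hsq, hD.map_mul_eq_zero h h]
  have hDf : (2 : ℂ) • D f = 0 := by
    have := congrArg₂ (· - ·) h4 h2
    rwa [add_sub_add_left_eq_sub, ← sub_smul, sub_self, show (4 : ℂ) - 2 = 2 by norm_num] at this
  have hDf0 : D f = 0 := (smul_eq_zero.mp hDf).resolve_left two_ne_zero
  exact ⟨by rwa [hDf0, smul_zero, add_zero] at h2, hDf0⟩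

end IsDerivation

section MatrixUnits

variable {A : Type*} [Ring A] [Algebra ℂ A] {n : ℕ}

omit [Algebra ℂ A] in
theorem isIdempotentElem_single_one (i : Fin n) :
    IsIdempotentElem (Matrix.single i i (1 : A)) := by
  rw [IsIdempotentElem, Matrix.single_mul_single_same, one_mul]

theorem single_one_mem_span (i j : Fin n) :
    Matrix.single i j (1 : A) ∈ Submodule.span ℂ (Set.range fun p : Fin n × Fin n =>
      Matrix.single p.1 p.2 (1 : A)) :=
  Submodule.subset_span ⟨(i, j), rfl⟩

theorem Is2LocalDerivation.exists_derivation_map_single_eq_zero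
    {Δ : Matrix (Fin n) (Fin n) A → Matrix (Fin n) (Fin n) A} (hΔ : Is2LocalDerivation Δ)
    (hvan : VanishesOnUnits Δ) (i j : Fin n) (x : Matrix (Fin n) (Fin n) A) :
    ∃ D, IsDerivation D ∧ Δ x = D x ∧
      D (Matrix.single i i (1 : A)) = 0 ∧ D (Matrix.single j j (1 : A)) = 0 := by
  rcases eq_or_ne i j with rfl | hij
  · obtain ⟨D, hD, hDx, hDe⟩ := hΔ x (Matrix.single i i 1)
    have hDe0 : D (Matrix.single i i 1) = 0 := hDe ▸ hvan _ (single_one_mem_span i i)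
    exact ⟨D, hD, hDx, hDe0, hDe0⟩
  · obtain ⟨D, hD, hDx, hDy⟩ := hΔ x (Matrix.single i i 1 + (2 : ℂ) • Matrix.single j j 1)
    have hDy0 := hDy ▸ hvan _ (Submodule.add_mem _ (single_one_mem_span i i)
      (Submodule.smul_mem _ _ (single_one_mem_span j j)))
    obtain ⟨hDe, hDf⟩ := hD.map_eq_zero_of_map_add_two_smul_eq_zero
      (isIdempotentElem_single_one i) (isIdempotentElem_single_one j)
      (Matrix.single_mul_single_of_ne (c := (1 : A)) i i j hij 1)
      (Matrix.single_mul_single_of_ne (c := (1 : A)) j j i hij.symm 1)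
      hDy0
    exact ⟨D, hD, hDx, hDe, hDf⟩

end MatrixUnits

theorem stmt6_general {A : Type*} [NormedRing A] [NormedAlgebra ℂ A]
    {n : ℕ}
    (Δ : Matrix (Fin n) (Fin n) A → Matrix (Fin n) (Fin n) A)
    (hΔ : Is2LocalDerivation Δ) (hvan : VanishesOnUnits Δ) :
    ∀ (i j : Fin n) (x : Matrix (Fin n) (Fin n) A),
      x = Matrix.single i i (1 : A) * x * Matrix.single j j (1 : A) →
      Δ x = Matrix.single i i (1 : A) * Δ x * Matrix.single j j (1 : A) := by
  intro i j x hx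
  obtain ⟨D, hD, hDx, hDe, hDf⟩ := hΔ.exists_derivation_map_single_eq_zero hvan i j x
  rw [hDx]
  exact hD.map_eq_mul_map_mul_of_eq_mul_mul hDe hDf hx

theorem stmt6 {A : Type*} [NormedRing A] [NormedAlgebra ℂ A] [CompleteSpace A]
    {n : ℕ} (hn : 2 ≤ n)
    (Δ : Matrix (Fin n) (Fin n) A → Matrix (Fin n) (Fin n) A)
    (hΔ : Is2LocalDerivation Δ) (hvan : VanishesOnUnits Δ) :
    ∀ (i j : Fin n) (x : Matrix (Fin n) (Fin n) A),
      x = Matrix.single i i (1 : A) * x * Matrix.single j j (1 : A) →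
      Δ x = Matrix.single i i (1 : A) * Δ x * Matrix.single j j (1 : A) :=
  stmt6_general Δ hΔ hvan
end

section
/- Let Δ be a 2-local derivation on M_n(A), n ≥ 2, vanishing on the span of the matrix units. Then for all i, j and all x ∈ e_{i,i}M_n(A)e_{i,i}, one has e_{j,i}Δ(x)e_{i,j} = Δ(e_{j,i} x e_{i,j}). -/
/-!
Put `p = e_{ij}`, `q = e_{ji}` and `y = q x p`. If `Δ a = 0` and `w = a w a`, a derivation
agreeing with `Δ` at `w` and `a` shows `Δ w = a Δ w a`. Since `Δ` vanishes on `pq = e_{ii}`,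
`qp = e_{jj}` and on the symmetry `p + q`, which swaps `x` and `y`, this gives
`q Δ(x) p = q Δ(x + y) p = qp Δ(x + y) qp = qp Δ(y) qp = Δ(y)`;
the first and third equalities hold because a derivation maps an element of one diagonal
corner to something with zero compression to the other corner.
-/

open Matrix

namespace IsDerivation

variable {R : Type*} [Ring R] [Algebra ℂ R] {D : R → R}

theorem map_mul_mul (hD : IsDerivation D) (a w b : R) :
    D (a * w * b) = D a * w * b + a * D w * b + a * w * D b := by
  rw [hD.2.2, hD.2.2]; noncomm_ring

theorem map_mul_mul_of_map_eq_zero (hD : IsDerivation D) {a b : R} (ha : D a = 0)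
    (hb : D b = 0) (w : R) : D (a * w * b) = a * D w * b := by
  simp [hD.map_mul_mul, ha, hb]

theorem mul_map_mul_mul_eq_zero (hD : IsDerivation D) {e a b f : R} (hea : e * a = 0)
    (hbf : b * f = 0) (y : R) : e * D (a * y * b) * f = 0 := calc
  _ = e * D a * y * (b * f) + e * a * (D y * b * f + y * D b * f) := by
    rw [hD.map_mul_mul]; noncomm_ring
  _ = 0 := by simp [hea, hbf]

end IsDerivation

namespace Is2LocalDerivation

variable {R : Type*} [Ring R] [Algebra ℂ R] {Δ : R → R}

theorem map_eq_mul_map_mul (hΔ : Is2LocalDerivation Δ) {a w : R} (ha : Δ a = 0)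
    (hw : w = a * w * a) : Δ w = a * Δ w * a := by
  obtain ⟨D, hD, hDw, hDa⟩ := hΔ w a
  rw [ha] at hDa
  rw [hDw]
  conv_lhs => rw [hw, hD.map_mul_mul_of_map_eq_zero hDa.symm hDa.symm]

theorem mul_map_add_mul (hΔ : Is2LocalDerivation Δ) {e f : R} (hef : e * f = 0)
    (hfe : f * e = 0) (x : R) {y : R} (hy : y = f * y * f) :
    e * Δ (x + y) * e = e * Δ x * e := by
  obtain ⟨D, hD, hDxy, hDx⟩ := hΔ (x + y) x
  rw [hDxy, hDx, hD.1, mul_add, add_mul, hy, hD.mul_map_mul_mul_eq_zero hef hfe, add_zero]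

end Is2LocalDerivation

theorem Is2LocalDerivation.mul_map_mul_of_matrixUnits {R : Type*} [Ring R] [Algebra ℂ R]
    {Δ : R → R} (hΔ : Is2LocalDerivation Δ) {p q : R} (hpqp : p * q * p = p)
    (hqpq : q * p * q = q) (hpp : p * p = 0) (hqq : q * q = 0) (hΔpq : Δ (p * q) = 0)
    (hΔqp : Δ (q * p) = 0) (hΔadd : Δ (p + q) = 0) {x : R} (hx : x = p * q * x * (p * q)) :
    q * Δ x * p = Δ (q * x * p) := by
  -- right-associated relations: a terminating, confluent rewrite system on words in `p`, `q`
  have hpp' (r : R) : p * (p * r) = 0 := by rw [← mul_assoc, hpp, zero_mul]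
  have hqq' (r : R) : q * (q * r) = 0 := by rw [← mul_assoc, hqq, zero_mul]
  have hpqp' (r : R) : p * (q * (p * r)) = p * r := by simp only [← mul_assoc, hpqp]
  have hqpq' (r : R) : q * (p * (q * r)) = q * r := by simp only [← mul_assoc, hqpq]
  rw [mul_assoc] at hpqp hqpq
  have hpq_qp : p * q * (q * p) = 0 := by simp only [mul_assoc, hqq', mul_zero]
  have hqp_pq : q * p * (p * q) = 0 := by simp only [mul_assoc, hpp', mul_zero]
  set y := q * x * p with hy
  have hyqp : y = q * p * y * (q * p) := by simp only [hy, mul_assoc, hpqp, hqpq']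
  have hswap : x + y = (p + q) * (x + y) * (p + q) := by
    obtain ⟨w, hw⟩ : ∃ w, x = p * q * w * (p * q) := ⟨x, hx⟩
    simp only [hy, hw, mul_assoc, mul_add, add_mul, hpp, hqq, hpqp, hpp', hqq', hqpq', mul_zero,
      zero_add, add_zero]
    abel
  have hΔx := hΔ.map_eq_mul_map_mul hΔpq hx
  have hΔy := hΔ.map_eq_mul_map_mul hΔqp hyqp
  have hΔxy := hΔ.map_eq_mul_map_mul hΔadd hswap
  calc q * Δ x * p
      = q * (p * q * Δ (x + y) * (p * q)) * p := by
        rw [hΔ.mul_map_add_mul hpq_qp hqp_pq x hyqp, ← hΔx]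
    _ = q * ((p + q) * Δ (x + y) * (p + q)) * p := by
        rw [← hΔxy]; simp only [mul_assoc, hqpq', hpqp]
    _ = q * p * Δ (x + y) * (q * p) := by
        simp only [mul_assoc, mul_add, add_mul, hpp, hqq', mul_zero, zero_add, add_zero]
    _ = q * p * Δ y * (q * p) := by rw [add_comm, hΔ.mul_map_add_mul hqp_pq hpq_qp y hx]
    _ = Δ y := hΔy.symm

theorem VanishesOnUnits.apply_single {A : Type*} [Ring A] [Algebra ℂ A] {n : ℕ}
    {Δ : Matrix (Fin n) (Fin n) A → Matrix (Fin n) (Fin n) A} (hvan : VanishesOnUnits Δ)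
    (i j : Fin n) : Δ (single i j 1) = 0 :=
  hvan _ (Submodule.subset_span ⟨(i, j), rfl⟩)

theorem VanishesOnUnits.apply_single_add_single {A : Type*} [Ring A] [Algebra ℂ A] {n : ℕ}
    {Δ : Matrix (Fin n) (Fin n) A → Matrix (Fin n) (Fin n) A} (hvan : VanishesOnUnits Δ)
    (i j k l : Fin n) : Δ (single i j 1 + single k l 1) = 0 :=
  hvan _ (Submodule.add_mem _ (Submodule.subset_span ⟨(i, j), rfl⟩)
    (Submodule.subset_span ⟨(k, l), rfl⟩))

theorem stmt8_general {A : Type*} [NormedRing A] [NormedAlgebra ℂ A] {n : ℕ}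
    (Δ : Matrix (Fin n) (Fin n) A → Matrix (Fin n) (Fin n) A)
    (hΔ : Is2LocalDerivation Δ) (hvan : VanishesOnUnits Δ) :
    ∀ (i j : Fin n) (x : Matrix (Fin n) (Fin n) A),
      x = Matrix.single i i (1 : A) * x * Matrix.single i i (1 : A) →
      Matrix.single j i (1 : A) * Δ x * Matrix.single i j (1 : A) =
        Δ (Matrix.single j i (1 : A) * x * Matrix.single i j (1 : A)) := by
  intro i j x hx
  rcases eq_or_ne i j with rfl | hij
  · rw [← hx]
    exact (hΔ.map_eq_mul_map_mul (hvan.apply_single i i) hx).symm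
  · have hii : single i j (1 : A) * single j i 1 = single i i 1 := by simp
    refine hΔ.mul_map_mul_of_matrixUnits (by simp) (by simp) ?_ ?_ ?_ ?_
      (hvan.apply_single_add_single i j j i) (by rwa [hii])
    · exact single_mul_single_of_ne _ _ _ _ hij.symm _
    · exact single_mul_single_of_ne _ _ _ _ hij _
    · rw [hii, hvan.apply_single]
    · simp [hvan.apply_single]

theorem stmt8 {A : Type*} [NormedRing A] [NormedAlgebra ℂ A] [CompleteSpace A]
    (hidp : HasInnerDerivationProperty A) {n : ℕ} (hn : 2 ≤ n)
    (Δ : Matrix (Fin n) (Fin n) A → Matrix (Fin n) (Fin n) A)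
    (hΔ : Is2LocalDerivation Δ) (hvan : VanishesOnUnits Δ) :
    ∀ (i j : Fin n) (x : Matrix (Fin n) (Fin n) A),
      x = Matrix.single i i (1 : A) * x * Matrix.single i i (1 : A) →
      Matrix.single j i (1 : A) * Δ x * Matrix.single i j (1 : A) =
        Δ (Matrix.single j i (1 : A) * x * Matrix.single i j (1 : A)) :=
  stmt8_general Δ hΔ hvan
end

section
/- Let n ≥ 3 and Δ a 2-local derivation on M_n(A) vanishing on the span of the matrix units. Then the restriction Δ_{i,i} of Δ to the corner e_{i,i}M_n(A)e_{i,i} is additive for each i. -/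
/-!
Every derivation `D` of `Mₙ(A)` is inner: subtracting `ad b` with `b = ∑ₖ D(e_{kz}) e_{zk}`
makes it vanish on the matrix units, after which it acts entrywise by one derivation of `A`,
inner by hypothesis. Hence any two values of `Δ` are given by a single commutator `[B, ·]`.

Pairing with `h = diag(0, 1, …, n - 1)`, which `Δ` kills, forces `B` to be diagonal, so `Δ` maps
the corner `e_{ii} Mₙ(A) e_{ii}` into itself, and the `(p, p)` entry of `Δ (diagonal d)` depends
only on `d p`. Pairing with `e_{ij} + e_{jk}` forces `B_{ii} = B_{jj} = B_{kk}`: for constant `d`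
this identifies the corner maps at `i`, `j`, `k`, and for `v = diagonal d` with
`d = (a at i, b at j, a + b at k)` it gives `Δ(v)_{kk} = Δ(v)_{ii} + Δ(v)_{jj}`, which is
additivity.
-/

open Matrix

namespace IsDerivation

variable {R : Type*} [Ring R] [Algebra ℂ R] {D : R → R}

lemma map_zero_s9 (hD : IsDerivation D) : D 0 = 0 := by
  simpa using hD.1 0 0

lemma map_one (hD : IsDerivation D) : D 1 = 0 := by
  simpa using hD.2.2 1 1

lemma map_sum_s9 (hD : IsDerivation D) {ι : Type*} (s : Finset ι) (f : ι → R) :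
    D (∑ i ∈ s, f i) = ∑ i ∈ s, D (f i) := by
  classical
  induction s using Finset.induction_on with
  | empty => simpa using hD.map_zero_s9
  | insert _ _ h ih => rw [Finset.sum_insert h, Finset.sum_insert h, hD.1, ih]

lemma sub_inner (hD : IsDerivation D) (b : R) :
    IsDerivation fun x => D x - (b * x - x * b) := by
  refine ⟨fun x y => ?_, fun c x => ?_, fun x y => ?_⟩
  · simp only [hD.1]; noncomm_ring
  · simp only [hD.2.1, mul_smul_comm, smul_mul_assoc, smul_sub]
  · simp only [hD.2.2]; noncomm_ring

lemma map_mul_mul_of_map_eq_zero_s9 (hD : IsDerivation D) {u v : R} (hu : D u = 0) (hv : D v = 0)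
    (x : R) : D (u * x * v) = u * D x * v := by
  rw [hD.2.2, hD.2.2, hu, hv]
  simp [mul_assoc]

end IsDerivation

section InnerMatrix

variable {ι : Type*} [Fintype ι] [DecidableEq ι] {A : Type*} [Ring A] [Algebra ℂ A]
  {D : Matrix ι ι A → Matrix ι ι A}

lemma IsDerivation.exists_inner_eq_on_single (hD : IsDerivation D) (z : ι) :
    ∃ b, ∀ p q, D (single p q 1) = b * single p q 1 - single p q 1 * b := by
  set b := ∑ k, D (single k z 1) * single z k 1
  refine ⟨b, fun p q => ?_⟩
  have hright : b * single p q 1 = D (single p z 1) * single z q 1 := by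
    rw [Finset.sum_mul, Finset.sum_eq_single p (fun k _ hk => by simp [mul_assoc, hk])
      (by simp), mul_assoc, single_mul_single_same, one_mul]
  have hb : b = -∑ k, single k z 1 * D (single z k 1) := by
    rw [eq_neg_iff_add_eq_zero, ← Finset.sum_add_distrib]
    simp_rw [← hD.2.2, single_mul_single_same, one_mul]
    rw [← hD.map_sum_s9, sum_single_one, hD.map_one]
  have hleft : single p q 1 * b = -(single p z 1 * D (single z q 1)) := by
    rw [hb, mul_neg, Finset.mul_sum, Finset.sum_eq_single q
      (fun k _ hk => by simp [← mul_assoc, Ne.symm hk]) (by simp), ← mul_assoc,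
      single_mul_single_same, one_mul]
  rw [hright, hleft, sub_neg_eq_add, ← hD.2.2, single_mul_single_same, one_mul]

lemma IsDerivation.apply_apply_eq_of_map_single_eq_zero (hD : IsDerivation D)
    (hunit : ∀ p q, D (single p q 1) = 0) (z : ι) (x : Matrix ι ι A) (s t : ι) :
    D x s t = D (single z z (x s t)) z z := by
  have hcorner : ∀ (M : Matrix ι ι A) p r,
      (single s p 1 * M * single r t 1 : Matrix ι ι A) s t = M p r := by
    simp
  calc D x s t = (single s s 1 * D x * single t t 1 : Matrix ι ι A) s t :=
        (hcorner _ _ _).symm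
    _ = D (single s s 1 * x * single t t 1) s t := by
      rw [hD.map_mul_mul_of_map_eq_zero_s9 (hunit s s) (hunit t t)]
    _ = D (single s z 1 * single z z (x s t) * single z t 1) s t := by simp
    _ = D (single z z (x s t)) z z := by
      rw [hD.map_mul_mul_of_map_eq_zero_s9 (hunit s z) (hunit z t), hcorner]

lemma IsDerivation.exists_inner_of_map_single_eq_zero (hidp : HasInnerDerivationProperty A)
    (hD : IsDerivation D) (hunit : ∀ p q, D (single p q 1) = 0) (z : ι) :
    ∃ B, ∀ x, D x = B * x - x * B := by
  set δ : A → A := fun a => D (single z z a) z z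
  have hδ : IsDerivation δ := by
    refine ⟨fun a b => ?_, fun c a => ?_, fun a b => ?_⟩
    · simp only [δ, single_add, hD.1, Matrix.add_apply]
    · simp only [δ, ← smul_single, hD.2.1, Matrix.smul_apply]
    · simp only [δ]
      rw [← single_mul_single_same a z z z b, hD.2.2, Matrix.add_apply, mul_single_apply_same,
        single_mul_apply_same]
  obtain ⟨u, hu⟩ := hidp δ hδ
  refine ⟨diagonal fun _ => u, fun x => ?_⟩
  ext s t
  simp [hD.apply_apply_eq_of_map_single_eq_zero hunit z x s t, δ, hu]

theorem HasInnerDerivationProperty.matrix_s9 (hidp : HasInnerDerivationProperty A) :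
    HasInnerDerivationProperty (Matrix ι ι A) := by
  intro D hD
  rcases isEmpty_or_nonempty ι with _ | ⟨⟨z⟩⟩
  · exact ⟨0, fun _ => Subsingleton.elim _ _⟩
  obtain ⟨b, hb⟩ := hD.exists_inner_eq_on_single z
  obtain ⟨B, hB⟩ := (hD.sub_inner b).exists_inner_of_map_single_eq_zero hidp
    (fun p q => sub_eq_zero.2 (hb p q)) z
  refine ⟨b + B, fun x => ?_⟩
  rw [sub_eq_iff_eq_add.1 (hB x)]
  noncomm_ring

end InnerMatrix

section Commute

variable {ι : Type*} [Fintype ι] [DecidableEq ι]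

lemma Matrix.apply_self_eq_of_commute_single_add_single {α : Type*} [Semiring α] {i j k : ι}
    (hij : i ≠ j) (hjk : j ≠ k) {B : Matrix ι ι α}
    (h : Commute (single i j 1 + single j k 1) B) : B i i = B j j ∧ B j j = B k k := by
  constructor
  · simpa [add_mul, mul_add, hij, hjk] using (ext_iff.mpr h i j).symm
  · simpa [add_mul, mul_add, hij.symm, hjk.symm] using (ext_iff.mpr h j k).symm

lemma Matrix.isDiag_of_commute_diagonal_smul_one {A : Type*} [Ring A] [Algebra ℂ A]
    {c : ι → ℂ} (hc : Function.Injective c) {B : Matrix ι ι A}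
    (h : Commute B (diagonal fun k => c k • 1)) : B.IsDiag := by
  intro s t hst
  have hst' := ext_iff.mpr h s t
  simp only [mul_diagonal, diagonal_mul, mul_smul_comm, mul_one, smul_mul_assoc, one_mul] at hst'
  have hsub : (c t - c s) • B s t = 0 := by rw [sub_smul, hst', sub_self]
  exact (smul_eq_zero.1 hsub).resolve_left (sub_ne_zero.2 (hc.ne hst.symm))

end Commute

def Is2LocalInner {R : Type*} [Ring R] (Δ : R → R) : Prop :=
  ∀ x y, ∃ b, Δ x = b * x - x * b ∧ Δ y = b * y - y * b

lemma Is2LocalDerivation.is2LocalInner {R : Type*} [Ring R] [Algebra ℂ R]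
    (hidp : HasInnerDerivationProperty R) {Δ : R → R} (hΔ : Is2LocalDerivation Δ) :
    Is2LocalInner Δ := by
  intro x y
  obtain ⟨D, hD, hx, hy⟩ := hΔ x y
  obtain ⟨b, hb⟩ := hidp D hD
  exact ⟨b, hx.trans (hb x), hy.trans (hb y)⟩

namespace Is2LocalInner

variable {ι : Type*} [Fintype ι] [DecidableEq ι] {A : Type*} [Ring A]
  {Δ : Matrix ι ι A → Matrix ι ι A}

lemma apply_diagonal_apply_self (hΔ : Is2LocalInner Δ) {d : ι → A} {p : ι} {a : A}
    (hd : d p = a) : Δ (diagonal d) p p = Δ (single p p a) p p := by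
  obtain ⟨B, hd', ha⟩ := hΔ (diagonal d) (single p p a)
  simp [hd', ha, hd]

lemma apply_single_self_eq_single [Algebra ℂ A] (hΔ : Is2LocalInner Δ) {c : ι → ℂ}
    (hc : Function.Injective c) (hh : Δ (diagonal fun k => c k • 1) = 0) (p : ι) (a : A) :
    Δ (single p p a) = single p p (Δ (single p p a) p p) := by
  obtain ⟨B, ha, hB⟩ := hΔ (single p p a) (diagonal fun k => c k • 1)
  have hdiag := isDiag_iff_diagonal_diag B |>.1 <|
    isDiag_of_commute_diagonal_smul_one hc (sub_eq_zero.1 (hB ▸ hh))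
  rw [ha, ← hdiag]
  ext s t
  by_cases hs : s = p <;> by_cases ht : t = p <;> simp [hs, ht, eq_comm (a := p)]

lemma exists_apply_diagonal_apply_self (hΔ : Is2LocalInner Δ) {i j k : ι}
    (ht : Δ (single i j 1 + single j k 1) = 0) (hij : i ≠ j) (hjk : j ≠ k) (d : ι → A) :
    ∃ c, ∀ p, (p = i ∨ p = j ∨ p = k) → Δ (diagonal d) p p = c * d p - d p * c := by
  obtain ⟨B, hd, hB⟩ := hΔ (diagonal d) (single i j 1 + single j k 1)
  obtain ⟨hBij, hBjk⟩ := apply_self_eq_of_commute_single_add_single hij hjk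
    (sub_eq_zero.1 (hB ▸ ht)).symm
  refine ⟨B i i, ?_⟩
  rintro p (rfl | rfl | rfl) <;> simp [hd, hBij, hBjk]

lemma apply_single_apply_self_eq (hΔ : Is2LocalInner Δ) {i j k : ι}
    (ht : Δ (single i j 1 + single j k 1) = 0) (hij : i ≠ j) (hjk : j ≠ k) {p q : ι}
    (hp : p = i ∨ p = j ∨ p = k) (hq : q = i ∨ q = j ∨ q = k) (a : A) :
    Δ (single p p a) p p = Δ (single q q a) q q := by
  obtain ⟨c, hc⟩ := hΔ.exists_apply_diagonal_apply_self ht hij hjk fun _ => a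
  rw [← hΔ.apply_diagonal_apply_self (d := fun _ => a) rfl, hc p hp,
    ← hΔ.apply_diagonal_apply_self (d := fun _ => a) rfl, hc q hq]

lemma apply_single_apply_self_add (hΔ : Is2LocalInner Δ) {i j k : ι}
    (ht : Δ (single i j 1 + single j k 1) = 0) (hij : i ≠ j) (hjk : j ≠ k) (hik : i ≠ k)
    (a b : A) :
    Δ (single i i (a + b)) i i = Δ (single i i a) i i + Δ (single i i b) i i := by
  set d : ι → A := fun r => if r = i then a else if r = j then b else a + b
  have hdi : d i = a := by simp [d]
  have hdj : d j = b := by simp [d, hij.symm]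
  have hdk : d k = a + b := by simp [d, hik.symm, hjk.symm]
  obtain ⟨c, hc⟩ := hΔ.exists_apply_diagonal_apply_self ht hij hjk d
  calc Δ (single i i (a + b)) i i = Δ (single k k (a + b)) k k :=
        hΔ.apply_single_apply_self_eq ht hij hjk (by simp) (by simp) _
    _ = c * (a + b) - (a + b) * c := by
        rw [← hΔ.apply_diagonal_apply_self hdk, hc k (by simp), hdk]
    _ = (c * a - a * c) + (c * b - b * c) := by noncomm_ring
    _ = Δ (single i i a) i i + Δ (single j j b) j j := by
        rw [← hΔ.apply_diagonal_apply_self hdi, ← hΔ.apply_diagonal_apply_self hdj,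
          hc i (by simp), hc j (by simp), hdi, hdj]
    _ = Δ (single i i a) i i + Δ (single i i b) i i := by
        rw [hΔ.apply_single_apply_self_eq ht hij hjk (p := j) (q := i) (by simp) (by simp)]

end Is2LocalInner

theorem stmt9_general {A : Type*} [NormedRing A] [NormedAlgebra ℂ A]
    (hidp : HasInnerDerivationProperty A) {n : ℕ} (hn : 3 ≤ n)
    (Δ : Matrix (Fin n) (Fin n) A → Matrix (Fin n) (Fin n) A)
    (hΔ : Is2LocalDerivation Δ) (hvan : VanishesOnUnits Δ) :
    ∀ (i : Fin n) (x y : Matrix (Fin n) (Fin n) A),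
      x = Matrix.single i i (1 : A) * x * Matrix.single i i (1 : A) →
      y = Matrix.single i i (1 : A) * y * Matrix.single i i (1 : A) →
      Δ (x + y) = Δ x + Δ y := by
  intro i x y hx hy
  have hΔ' := hΔ.is2LocalInner hidp.matrix_s9
  obtain ⟨j, hj, k, hk, hjk⟩ := Finset.one_lt_card.1 <|
    show 1 < ({i}ᶜ : Finset (Fin n)).card by
      rw [Finset.card_compl, Finset.card_singleton, Fintype.card_fin]; omega
  simp only [Finset.mem_compl, Finset.mem_singleton] at hj hk
  have hunit : ∀ p q, single p q (1 : A) ∈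
      Submodule.span ℂ (Set.range fun p : Fin n × Fin n => single p.1 p.2 (1 : A)) :=
    fun p q => Submodule.subset_span ⟨(p, q), rfl⟩
  have hh : Δ (diagonal fun p : Fin n => ((p : ℕ) : ℂ) • (1 : A)) = 0 := by
    refine hvan _ ?_
    rw [← sum_single_eq_diagonal]
    simp_rw [← smul_single]
    exact Submodule.sum_mem _ fun p _ => Submodule.smul_mem _ _ (hunit p p)
  have hinj : Function.Injective fun p : Fin n => ((p : ℕ) : ℂ) :=
    (Nat.cast_injective (R := ℂ)).comp Fin.val_injective
  have hx' : x = single i i (x i i) := hx.trans (by simp)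
  have hy' : y = single i i (y i i) := hy.trans (by simp)
  rw [hx', hy', ← single_add, hΔ'.apply_single_self_eq_single hinj hh,
    hΔ'.apply_single_self_eq_single hinj hh i (x i i),
    hΔ'.apply_single_self_eq_single hinj hh i (y i i), ← single_add,
    hΔ'.apply_single_apply_self_add (hvan _ (add_mem (hunit i j) (hunit j k))) (Ne.symm hj) hjk
      (Ne.symm hk)]

theorem stmt9 {A : Type*} [NormedRing A] [NormedAlgebra ℂ A] [CompleteSpace A]
    (hidp : HasInnerDerivationProperty A) {n : ℕ} (hn : 3 ≤ n)
    (Δ : Matrix (Fin n) (Fin n) A → Matrix (Fin n) (Fin n) A)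
    (hΔ : Is2LocalDerivation Δ) (hvan : VanishesOnUnits Δ) :
    ∀ (i : Fin n) (x y : Matrix (Fin n) (Fin n) A),
      x = Matrix.single i i (1 : A) * x * Matrix.single i i (1 : A) →
      y = Matrix.single i i (1 : A) * y * Matrix.single i i (1 : A) →
      Δ (x + y) = Δ x + Δ y :=
  stmt9_general hidp hn Δ hΔ hvan
end

section
/- Let Δ be a 2-local derivation on M_2(B) vanishing on the span of the matrix units. If x ∈ M_2(B) has (k,s)-entry equal to λ·1_B for some scalar λ ∈ ℂ, then the (k,s)-entry of Δ(x) is zero. -/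
open Matrix

/-! With `e = E_{sk}` one has `e x e = λ e`. Choosing a derivation `D` that agrees with `Δ` at `x`
and at `e`, the Leibniz rule and `D e = 0` give `e (Δ x) e = D (e x e) = λ D e = 0`, and the
`(s, k)`-entry of `e y e` is the `(k, s)`-entry of `y`. -/

namespace IsDerivation

variable {A : Type*} [Ring A] [Algebra ℂ A] {D : A → A}

theorem map_mul_mul_of_map_eq_zero_s12 (hD : IsDerivation D) {e : A} (he : D e = 0) (x : A) :
    D (e * x * e) = e * D x * e := by
  rw [hD.2.2, hD.2.2, he]
  simp only [zero_mul, zero_add, mul_zero, add_zero]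

theorem apply_apply_eq_zero_of_apply_eq_smul_one {n : Type*} [Fintype n] [DecidableEq n]
    {D : Matrix n n A → Matrix n n A} (hD : IsDerivation D) {k s : n}
    (hDe : D (single s k 1) = 0) {x : Matrix n n A} {c : ℂ} (hx : x k s = c • 1) :
    D x k s = 0 := by
  calc D x k s = (single s k 1 * D x * single s k 1 : Matrix n n A) s k := by
        rw [single_mul_mul_single, single_apply_same, one_mul, mul_one]
    _ = D (single s k 1 * x * single s k 1) s k := by
        rw [hD.map_mul_mul_of_map_eq_zero_s12 hDe]
    _ = D (c • single s k 1) s k := by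
        rw [single_mul_mul_single, hx, one_mul, mul_one, smul_single]
    _ = 0 := by
        rw [hD.2.1, hDe, smul_zero, Matrix.zero_apply]

end IsDerivation

theorem stmt12_general {B : Type*} [NormedRing B] [NormedAlgebra ℂ B]
    (Δ : Matrix (Fin 2) (Fin 2) B → Matrix (Fin 2) (Fin 2) B)
    (hΔ : Is2LocalDerivation Δ) (hvan : VanishesOnUnits Δ)
    (k s : Fin 2) (lam : ℂ) (x : Matrix (Fin 2) (Fin 2) B)
    (hx : x k s = lam • (1 : B)) :
    Δ x k s = 0 := by
  obtain ⟨D, hD, hDx, hDe⟩ := hΔ x (single s k 1)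
  have hDe_zero : D (single s k 1) = 0 :=
    hDe ▸ hvan _ (Submodule.subset_span ⟨(s, k), rfl⟩)
  rw [hDx]
  exact hD.apply_apply_eq_zero_of_apply_eq_smul_one hDe_zero hx

theorem stmt12 {B : Type*} [NormedRing B] [NormedAlgebra ℂ B] [CompleteSpace B]
    (Δ : Matrix (Fin 2) (Fin 2) B → Matrix (Fin 2) (Fin 2) B)
    (hΔ : Is2LocalDerivation Δ) (hvan : VanishesOnUnits Δ)
    (k s : Fin 2) (lam : ℂ) (x : Matrix (Fin 2) (Fin 2) B)
    (hx : x k s = lam • (1 : B)) :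
    Δ x k s = 0 :=
  stmt12_general Δ hΔ hvan k s lam x hx
end

section
/- Let Δ be a 2-local derivation on M_2(B). For matrices x = [[x11, x12],[x21, x22]] and y = [[x11, x12],[0, x22]] (same entries except the (2,1)-entry), the (1,2)-entries of Δ(x) and Δ(y) coincide. -/
open Matrix

theorem Is2LocalDerivation.exists_sub_eq {A : Type*} [Ring A] [Algebra ℂ A] {Δ : A → A}
    (hΔ : Is2LocalDerivation Δ) (x y : A) :
    ∃ D, IsDerivation D ∧ Δ x - Δ y = D (x - y) := by
  obtain ⟨D, hD, hx, hy⟩ := hΔ x y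
  refine ⟨D, hD, ?_⟩
  rw [hx, hy, sub_eq_iff_eq_add, ← hD.1, sub_add_cancel]

/-- In `D (Eⱼⱼ z) = D Eⱼⱼ * z + Eⱼⱼ * D z` the first term has no column `j` and the second
no row `i`. -/
theorem Matrix.leibniz_apply_eq_zero_of_single_mul_eq {n A : Type*} [Fintype n]
    [DecidableEq n] [Semiring A] {D : Matrix n n A → Matrix n n A}
    (hmul : ∀ a b, D (a * b) = D a * b + a * D b) {i j : n} (hij : i ≠ j)
    {z : Matrix n n A} (hrow : single j j 1 * z = z) (hcol : ∀ k, z k j = 0) :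
    D z i j = 0 := by
  rw [← hrow, hmul, add_apply, mul_apply, single_mul_apply_of_ne _ _ _ _ _ hij]
  simp [hcol]

theorem stmt13_general {B : Type*} [NormedRing B] [NormedAlgebra ℂ B]
    (Δ : Matrix (Fin 2) (Fin 2) B → Matrix (Fin 2) (Fin 2) B)
    (hΔ : Is2LocalDerivation Δ)
    (x y : Matrix (Fin 2) (Fin 2) B)
    (h00 : y 0 0 = x 0 0) (h01 : y 0 1 = x 0 1)
    (h11 : y 1 1 = x 1 1) :
    Δ x 0 1 = Δ y 0 1 := by
  obtain ⟨D, hD, hsub⟩ := hΔ.exists_sub_eq x y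
  have hrow : single 1 1 1 * (x - y) = x - y := by
    ext i j
    fin_cases i <;> fin_cases j <;> simp [h00, h01]
  have hcol : ∀ k, (x - y) k 1 = 0 := by
    intro k
    fin_cases k <;> simp [h01, h11]
  rw [← sub_eq_zero, ← Matrix.sub_apply, hsub]
  exact leibniz_apply_eq_zero_of_single_mul_eq hD.2.2 (by decide) hrow hcol

theorem stmt13 {B : Type*} [NormedRing B] [NormedAlgebra ℂ B] [CompleteSpace B]
    (hidp : HasInnerDerivationProperty B)
    (Δ : Matrix (Fin 2) (Fin 2) B → Matrix (Fin 2) (Fin 2) B)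
    (hΔ : Is2LocalDerivation Δ)
    (x y : Matrix (Fin 2) (Fin 2) B)
    (h00 : y 0 0 = x 0 0) (h01 : y 0 1 = x 0 1)
    (h10 : y 1 0 = 0) (h11 : y 1 1 = x 1 1) :
    Δ x 0 1 = Δ y 0 1 :=
  stmt13_general Δ hΔ x y h00 h01 h11
end
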